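/- Let ζ > 1, ξ ≥ 1, β ≥ 0, ν > e^{1/(1+2β)}, n ≥ 2, and define λ_k = √(ξζ)(1 + √(2(1+2β)log(νn/k))) for 1 ≤ k ≤ n and t_k^2 = k λ_k^2 − (k−1)λ_{k−1}^2 (with λ_0 arbitrary, k ≥ 2). Then there is a constant c > 0 (depending on ζ, ξ, β, ν) such that |t_k − λ_k| ≤ c/λ_k for all 2 ≤ k ≤ n; in particular t_k / λ_k → 1 uniformly as λ_k → ∞. -/

import Mathlib

/- Since `t_k² = λ_k² − E_k` with `E_k = (k−1)(λ_{k−1}² − λ_k²) ≥ 0` and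
`|√(λ² − E) − λ| ≤ E / λ`, it suffices to bound `E_k` uniformly. Writing
`λ_j = √(ξζ)(1 + √u_j)` with `u_j = b log(νn/j)`, `b = 2(1+2β)`, the mean value estimate
`√v − √u ≤ (v − u)/(2√u)` and `u_k ≥ b log ν > 0` give
`λ_{k−1}² − λ_k² ≤ ξζ (1 + 1/√(b log ν)) (u_{k−1} − u_k)`, while
`u_{k−1} − u_k = b log(k/(k−1)) ≤ b/(k−1)`. -/

/-- The penalty constants `λ_{n,k} = √(ξζ)(1 + √(2(1+2β) log(νn/k)))`. -/
noncomputable def lamNK (ξ ζ β ν : ℝ) (n k : ℕ) : ℝ :=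
  Real.sqrt (ξ * ζ) *
    (1 + Real.sqrt (2 * (1 + 2 * β) * Real.log (ν * n / k)))

open Real

lemma abs_sqrt_sq_sub_sub_le {x e : ℝ} (hx : 0 < x) (he : 0 ≤ e) :
    |√(x ^ 2 - e) - x| ≤ e / x := by
  have hle : √(x ^ 2 - e) ≤ x := (sqrt_le_left hx.le).2 (by linarith)
  rw [abs_of_nonpos (by linarith), le_div_iff₀ hx]
  rcases le_or_gt 0 (x ^ 2 - e) with h | h
  · have hsq := sq_sqrt h
    nlinarith [sqrt_nonneg (x ^ 2 - e)]
  · rw [sqrt_eq_zero_of_nonpos h.le]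
    nlinarith

lemma sqrt_sub_sqrt_le_div {u v : ℝ} (hu : 0 < u) (huv : u ≤ v) :
    √v - √u ≤ (v - u) / (2 * √u) := by
  have hsu : 0 < √u := sqrt_pos.2 hu
  have hsuv : √u ≤ √v := sqrt_le_sqrt huv
  rw [le_div_iff₀ (by positivity)]
  nlinarith [sq_sqrt hu.le, sq_sqrt (hu.le.trans huv)]

lemma sq_one_add_sqrt_sub_sq_le {u v : ℝ} (hu : 0 < u) (huv : u ≤ v) :
    (1 + √v) ^ 2 - (1 + √u) ^ 2 ≤ (1 + 1 / √u) * (v - u) := by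
  have hsu : 0 < √u := sqrt_pos.2 hu
  have key := sqrt_sub_sqrt_le_div hu huv
  have hexp : (1 + √v) ^ 2 - (1 + √u) ^ 2 = (v - u) + 2 * (√v - √u) := by
    rw [add_sq, add_sq, sq_sqrt hu.le, sq_sqrt (hu.le.trans huv)]
    ring
  have hrhs : (1 + 1 / √u) * (v - u) = (v - u) + 2 * ((v - u) / (2 * √u)) := by
    field_simp
  rw [hexp, hrhs]
  linarith

lemma sub_one_mul_log_div_sub_one_le_one {x : ℝ} (hx : 1 < x) :
    (x - 1) * log (x / (x - 1)) ≤ 1 := by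
  have hx1 : 0 < x - 1 := by linarith
  calc (x - 1) * log (x / (x - 1)) ≤ (x - 1) * (x / (x - 1) - 1) :=
        mul_le_mul_of_nonneg_left (log_le_sub_one_of_pos (by positivity)) hx1.le
    _ = 1 := by field_simp; ring

section lamNK

variable {ξ ζ β ν : ℝ} {n : ℕ}

lemma lamNK_pos (hξζ : 0 < ξ * ζ) (k : ℕ) : 0 < lamNK ξ ζ β ν n k :=
  mul_pos (sqrt_pos.2 hξζ) (by positivity)

lemma lamNK_sq (hξζ : 0 ≤ ξ * ζ) (k : ℕ) :
    lamNK ξ ζ β ν n k ^ 2 =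
      ξ * ζ * (1 + √(2 * (1 + 2 * β) * log (ν * n / k))) ^ 2 := by
  rw [lamNK, mul_pow, sq_sqrt hξζ]

lemma lamNK_le_lamNK (hβ : 0 ≤ β) (hν : 0 < ν) (hn : 0 < n)
    {j k : ℕ} (hj : 0 < j) (hjk : j ≤ k) :
    lamNK ξ ζ β ν n k ≤ lamNK ξ ζ β ν n j := by
  have hjR : (0 : ℝ) < j := by exact_mod_cast hj
  have hjkR : (j : ℝ) ≤ k := by exact_mod_cast hjk
  have hnR : (0 : ℝ) < n := by exact_mod_cast hn
  have hb : 0 ≤ 2 * (1 + 2 * β) := by linarith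
  have harg : 0 < ν * n / k := by have := hjR.trans_le hjkR; positivity
  unfold lamNK
  gcongr

lemma sub_one_mul_lamNK_sq_sub_le (hξζ : 0 ≤ ξ * ζ) (hβ : 0 ≤ β) (hν : 1 < ν)
    {k : ℕ} (hk : 2 ≤ k) (hkn : k ≤ n) :
    ((k : ℝ) - 1) * (lamNK ξ ζ β ν n (k - 1) ^ 2 - lamNK ξ ζ β ν n k ^ 2) ≤
      ξ * ζ * (2 * (1 + 2 * β)) * (1 + 1 / √(2 * (1 + 2 * β) * log ν)) := by
  set b := 2 * (1 + 2 * β)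
  have hb : 0 < b := by linarith
  have hkR : (2 : ℝ) ≤ k := by exact_mod_cast hk
  have hknR : (k : ℝ) ≤ n := by exact_mod_cast hkn
  have hnR : (0 : ℝ) < n := by linarith
  have hk1pos : (0 : ℝ) < k - 1 := by linarith
  have hk1 : ((k - 1 : ℕ) : ℝ) = k - 1 := Nat.cast_pred (by omega)
  have hlogν : 0 < b * log ν := mul_pos hb (log_pos hν)
  have hνk : b * log ν ≤ b * log (ν * n / k) := by
    gcongr
    rw [le_div_iff₀ (by positivity)]
    gcongr
  have hu : 0 < b * log (ν * n / k) := hlogν.trans_le hνk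
  have hgap : b * log (ν * n / (k - 1)) - b * log (ν * n / k) = b * log (k / (k - 1)) := by
    rw [← mul_sub, ← log_div (by positivity) (by positivity)]
    congr 2
    field_simp
  have hδ : 0 ≤ b * log ((k : ℝ) / (k - 1)) :=
    mul_nonneg hb.le (log_nonneg ((one_le_div (by linarith)).2 (by linarith)))
  have huv : b * log (ν * n / k) ≤ b * log (ν * n / (k - 1)) := by linarith
  have hsqrt : 1 / √(b * log (ν * n / k)) ≤ 1 / √(b * log ν) :=
    one_div_le_one_div_of_le (sqrt_pos.2 hlogν) (sqrt_le_sqrt hνk)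
  have hstep := sq_one_add_sqrt_sub_sq_le hu huv
  rw [hgap] at hstep
  have hlog := sub_one_mul_log_div_sub_one_le_one (by linarith : (1 : ℝ) < k)
  have hdiff : lamNK ξ ζ β ν n (k - 1) ^ 2 - lamNK ξ ζ β ν n k ^ 2 ≤
      ξ * ζ * ((1 + 1 / √(b * log ν)) * (b * log (k / (k - 1)))) := by
    rw [lamNK_sq hξζ, lamNK_sq hξζ, hk1, ← mul_sub]
    exact mul_le_mul_of_nonneg_left (hstep.trans (by gcongr)) hξζ
  calc ((k : ℝ) - 1) * (lamNK ξ ζ β ν n (k - 1) ^ 2 - lamNK ξ ζ β ν n k ^ 2)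
      ≤ ((k : ℝ) - 1) * (ξ * ζ * ((1 + 1 / √(b * log ν)) * (b * log (k / (k - 1))))) :=
        mul_le_mul_of_nonneg_left hdiff hk1pos.le
    _ = ξ * ζ * b * (1 + 1 / √(b * log ν)) * (((k : ℝ) - 1) * log (k / (k - 1))) := by ring
    _ ≤ ξ * ζ * b * (1 + 1 / √(b * log ν)) := mul_le_of_le_one_right (by positivity) hlog

end lamNK

/-- the marginal threshold `t_k` with
`t_k² = k λ_k² − (k−1) λ_{k−1}²` satisfies `|t_k − λ_k| ≤ c / λ_k`. -/
theorem stmt18 (ζ ξ β ν : ℝ) (hζ : 1 < ζ) (hξ : 1 ≤ ξ) (hβ : 0 ≤ β)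
    (hν : Real.exp (1 / (1 + 2 * β)) < ν) :
    ∃ c : ℝ, 0 < c ∧ ∀ n : ℕ, 2 ≤ n → ∀ k : ℕ, 2 ≤ k → k ≤ n →
      |Real.sqrt ((k : ℝ) * (lamNK ξ ζ β ν n k) ^ 2 -
            ((k : ℝ) - 1) * (lamNK ξ ζ β ν n (k - 1)) ^ 2) -
          lamNK ξ ζ β ν n k|
        ≤ c / lamNK ξ ζ β ν n k := by
  have hν1 : 1 < ν := (one_lt_exp_iff.2 (by positivity)).trans hν
  have hξζ : 0 < ξ * ζ := by nlinarith
  have hc : 0 < ξ * ζ * (2 * (1 + 2 * β)) * (1 + 1 / √(2 * (1 + 2 * β) * log ν)) := by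
    have : 0 < 2 * (1 + 2 * β) := by linarith
    positivity
  refine ⟨_, hc, fun n hn k hk hkn => ?_⟩
  have hpos := lamNK_pos (β := β) (ν := ν) (n := n) hξζ k
  have hmono : lamNK ξ ζ β ν n k ≤ lamNK ξ ζ β ν n (k - 1) :=
    lamNK_le_lamNK hβ (by linarith) (by omega) (by omega) (by omega)
  have hE : 0 ≤ ((k : ℝ) - 1) * (lamNK ξ ζ β ν n (k - 1) ^ 2 - lamNK ξ ζ β ν n k ^ 2) :=
    mul_nonneg (sub_nonneg.2 (Nat.one_le_cast.2 (by omega)))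
      (sub_nonneg.2 (pow_le_pow_left₀ hpos.le hmono 2))
  calc _ = |√(lamNK ξ ζ β ν n k ^ 2 - ((k : ℝ) - 1) *
            (lamNK ξ ζ β ν n (k - 1) ^ 2 - lamNK ξ ζ β ν n k ^ 2)) - lamNK ξ ζ β ν n k| := by
        ring_nf
    _ ≤ _ := abs_sqrt_sq_sub_sub_le hpos hE
    _ ≤ _ := div_le_div_of_nonneg_right
        (sub_one_mul_lamNK_sq_sub_le hξζ.le hβ hν1 hk hkn) hpos.le
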